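/- arXiv:1907.01816 — 2 statements merged into one kernel-verified Lean document; each statement's English description precedes it below -/
import Mathlib

section
/- Let α, β be complex numbers with 0 < |α| < 1 and 0 < |β| < 1, α ≠ β, and let M = diag(α, β) ∈ GL₂(ℂ). Then the normalizer in GL₂(ℂ) of the cyclic subgroup generated by M equals the centralizer of M in GL₂(ℂ). -/
namespace Subgroup

variable {G : Type*} [Group G]

theorem centralizer_singleton_le_normalizer_zpowers (g : G) :
    centralizer {g} ≤ normalizer (zpowers g : Set G) := by
  rw [← centralizer_closure, ← zpowers_eq_closure]
  exact centralizer_le_normalizer _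

/-- If `r g r⁻¹ = g ^ k`, applying a character `f` gives `f g ^ k = f g`, so `k = 1` as soon as
`f g` has infinite order. -/
theorem normalizer_zpowers_le_centralizer_singleton {A : Type*} [CommGroup A] (f : G →* A)
    {g : G} (hg : ¬IsOfFinOrder (f g)) : normalizer (zpowers g : Set G) ≤ centralizer {g} := by
  intro r hr
  obtain ⟨k, hk : g ^ k = r * g * r⁻¹⟩ := (mem_normalizer_iff.mp hr g).mp (mem_zpowers g)
  have hfk : f g ^ k = f g ^ (1 : ℤ) := by
    simpa [mul_comm (f r)] using congrArg f hk
  have hk1 : k = 1 := injective_zpow_iff_not_isOfFinOrder.mpr hg hfk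
  rw [hk1, zpow_one, eq_mul_inv_iff_mul_eq] at hk
  exact mem_centralizer_singleton_iff.mpr hk.symm

theorem normalizer_zpowers_eq_centralizer_singleton {A : Type*} [CommGroup A] (f : G →* A)
    {g : G} (hg : ¬IsOfFinOrder (f g)) : normalizer (zpowers g : Set G) = centralizer {g} :=
  le_antisymm (normalizer_zpowers_le_centralizer_singleton f hg)
    (centralizer_singleton_le_normalizer_zpowers g)

end Subgroup

theorem Units.not_isOfFinOrder_of_norm_ne_one {R : Type*} [NormedRing R] [NormMulClass R]
    [NormOneClass R] {u : Rˣ} (hu : ‖(u : R)‖ ≠ 1) : ¬IsOfFinOrder u :=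
  fun h ↦ hu (Units.isOfFinOrder_val.mpr h).norm_eq_one

theorem stmt_2_general (α β : ℂ) (hα1 : ‖α‖ < 1)
    (hβ1 : ‖β‖ < 1)
    (M : GL (Fin 2) ℂ)
    (hM : (M : Matrix (Fin 2) (Fin 2) ℂ) = !![α, 0; 0, β]) :
    Subgroup.normalizer ((Subgroup.zpowers M : Subgroup (GL (Fin 2) ℂ)) : Set (GL (Fin 2) ℂ)) = Subgroup.centralizer {M} := by
  refine Subgroup.normalizer_zpowers_eq_centralizer_singleton Matrix.GeneralLinearGroup.det
    (Units.not_isOfFinOrder_of_norm_ne_one ?_)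
  have hdet : (M.det : ℂ) = α * β := by
    rw [Matrix.GeneralLinearGroup.val_det_apply, hM, Matrix.det_fin_two_of]
    ring
  rw [hdet, norm_mul]
  exact (mul_lt_one_of_nonneg_of_lt_one_left (norm_nonneg α) hα1 hβ1.le).ne

/-- For `M = diag(α, β)` with `0 < |α| < 1`, `0 < |β| < 1`, `α ≠ β`, the normalizer in
`GL₂(ℂ)` of the cyclic subgroup generated by `M` equals the centralizer of `M`. -/
theorem stmt_2 (α β : ℂ) (hα0 : 0 < ‖α‖) (hα1 : ‖α‖ < 1)
    (hβ0 : 0 < ‖β‖) (hβ1 : ‖β‖ < 1) (hαβ : α ≠ β)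
    (M : GL (Fin 2) ℂ)
    (hM : (M : Matrix (Fin 2) (Fin 2) ℂ) = !![α, 0; 0, β]) :
    Subgroup.normalizer ((Subgroup.zpowers M : Subgroup (GL (Fin 2) ℂ)) : Set (GL (Fin 2) ℂ)) = Subgroup.centralizer {M} :=
  stmt_2_general α β hα1 hβ1 M hM
end

section
/- Let C = ℂ/Λ be an elliptic curve and let G be a nontrivial finite subgroup of the automorphism group of C (as a group with a fixed origin action extended by translations) whose action on C is not free, i.e., some nontrivial element of G has a fixed point. Then the normalizer of G in Aut(C) is finite, where Aut(C) sits in an exact sequence 1 → C → Aut(C) → ℤ/nℤ → 1 with n ≤ 6. -/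
/-!
Let `g ∈ G` be a nontrivial element with a fixed point. Translations act freely, so the rotation
`σ` of `g` is multiplication by a root of unity `ρ ≠ 1`. A point fixed by `σ` is then
`n`-torsion, because `n • y = ∑_{k<n} σ^k y` and `∑_{k<n} ρ^k = 0`; hence `σ` has finitely many
fixed points. Consequently the centralizer of `g` is finite: for `t = (a, τ)` commuting with `g`,
`a - σ a` is one of the finitely many points `g.left - τ g.left`. Finally, conjugation by an
element of the normalizer sends `g` into the finite group `G`, and each fibre of `t ↦ t g t⁻¹` is
a coset of the centralizer.
-/

/-- The action of the automorphism group `Aut(C) = C ⋊ ℤ/n` of an elliptic curve `C` on `C`: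
the element `(a, σ)` sends `x` to `a + σ(x)`. -/
def ellipticAut.act {A : Type*} [AddCommGroup A] {H : Type*} [Group H]
    (φ : H →* MulAut (Multiplicative A)) (g : Multiplicative A ⋊[φ] H) (x : A) : A :=
  (g.left).toAdd + (φ g.right (Multiplicative.ofAdd x)).toAdd

theorem MonoidHom.finite_preimage_of_finite_ker {M N : Type*} [Group M] [Group N] (f : M →* N)
    (hf : (f.ker : Set M).Finite) {s : Set N} (hs : s.Finite) : (f ⁻¹' s).Finite := by
  refine hs.preimage' fun b _ => ?_
  rcases (f ⁻¹' {b}).eq_empty_or_nonempty with h | ⟨a, rfl⟩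
  · simp [h]
  · exact (hf.image (a * ·)).subset fun x hx => ⟨a⁻¹ * x, f.eq_iff.mp hx, by simp⟩

theorem Subgroup.finite_setOf_conj_mem {G : Type*} [Group G] {g : G}
    (hg : (centralizer {g} : Set G).Finite) {s : Set G} (hs : s.Finite) :
    {t : G | t * g * t⁻¹ ∈ s}.Finite := by
  refine hs.preimage' fun b _ => ?_
  rcases ((fun t => t * g * t⁻¹) ⁻¹' {b}).eq_empty_or_nonempty with h | ⟨a, rfl⟩
  · simp [h]
  · refine (hg.image (a * ·)).subset fun x hx => ⟨a⁻¹ * x, ?_, by simp⟩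
    have hx : x * g * x⁻¹ = a * g * a⁻¹ := hx
    rw [SetLike.mem_coe, mem_centralizer_singleton_iff]
    calc a⁻¹ * x * g = a⁻¹ * (x * g * x⁻¹) * x := by group
      _ = a⁻¹ * (a * g * a⁻¹) * x := by rw [hx]
      _ = g * (a⁻¹ * x) := by group

theorem SemidirectProduct.finite_centralizer_singleton {N H : Type*} [CommGroup N] [Group H]
    [Finite H] {φ : H →* MulAut N} {g : N ⋊[φ] H} (hfix : {a : N | φ g.right a = a}.Finite) :
    (Subgroup.centralizer {g} : Set (N ⋊[φ] H)).Finite := by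
  let ψ : N →* N := MonoidHom.id N / (φ g.right).toMonoidHom
  let S : Set N := Set.range fun h => g.left / φ h g.left
  have hker : (ψ.ker : Set N) = {a | φ g.right a = a} :=
    Set.ext fun a => show a / φ g.right a = 1 ↔ φ g.right a = a from div_eq_one.trans eq_comm
  have hcomm : ∀ t ∈ Subgroup.centralizer {g}, ψ t.left ∈ S := by
    intro t ht
    refine ⟨t.right, ?_⟩
    have hleft := congrArg left (Subgroup.mem_centralizer_singleton_iff.mp ht)
    simp only [mul_left] at hleft
    exact div_eq_div_iff_mul_eq_mul.mpr hleft.symm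
  have hprod : (equivProd '' (Subgroup.centralizer {g} : Set (N ⋊[φ] H))).Finite := by
    refine ((ψ.finite_preimage_of_finite_ker (hker ▸ hfix) (s := S) (Set.finite_range _)).prod
      Set.finite_univ).subset ?_
    rintro _ ⟨t, ht, rfl⟩
    exact ⟨hcomm t ht, trivial⟩
  exact hprod.of_finite_image equivProd.injective.injOn

open Finset in
theorem QuotientAddGroup.nsmul_eq_zero_of_fixed_by_root_of_unity {K : Type*} [Field K]
    {Λ : AddSubgroup K} {n : ℕ} {ρ : K} (hρn : ρ ^ n = 1) (hρ1 : ρ ≠ 1) {σ : K ⧸ Λ → K ⧸ Λ}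
    (hσ : ∀ z : K, σ z = ↑(ρ * z)) {y : K ⧸ Λ} (hy : σ y = y) : n • y = 0 := by
  obtain ⟨z, rfl⟩ := mk_surjective y
  have hpow : ∀ k : ℕ, ((ρ ^ k * z : K) : K ⧸ Λ) = z := by
    intro k
    induction k with
    | zero => simp
    | succ k ih => rw [pow_succ', mul_assoc, ← hσ, ih, hy]
  have hsum : ∑ k ∈ range n, ρ ^ k = 0 := by rw [geom_sum_eq hρ1, hρn, sub_self, zero_div]
  calc n • (z : K ⧸ Λ) = ∑ k ∈ range n, ((ρ ^ k * z : K) : K ⧸ Λ) := by simp [hpow]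
    _ = ((∑ k ∈ range n, ρ ^ k) * z : K) := by rw [sum_mul, ← mk_sum]
    _ = 0 := by rw [hsum, zero_mul, mk_zero]

theorem QuotientAddGroup.finite_setOf_nsmul_eq_zero_closure_pair {K : Type*} [Field K]
    [CharZero K] (ω₁ ω₂ : K) {n : ℕ} (hn : n ≠ 0) :
    {y : K ⧸ AddSubgroup.closure {ω₁, ω₂} | n • y = 0}.Finite := by
  set Λ := AddSubgroup.closure {ω₁, ω₂}
  have hn' : (n : K) ≠ 0 := Nat.cast_ne_zero.mpr hn
  have hn0 : (0 : ℤ) < n := by omega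
  have htors : ∀ ω ∈ ({ω₁, ω₂} : Set K), (n : ℤ) • ((ω / n : K) : K ⧸ Λ) = 0 := by
    intro ω hω
    rw [← mk_zsmul, zsmul_eq_mul, Int.cast_natCast, mul_div_cancel₀ _ hn', eq_zero_iff]
    exact AddSubgroup.subset_closure hω
  have hmod : ∀ w : K ⧸ Λ, (n : ℤ) • w = 0 → ∀ a : ℤ, a • w = (a % n) • w := by
    intro w hw a
    conv_lhs => rw [← Int.emod_add_mul_ediv a n]
    rw [add_zsmul, mul_comm, mul_zsmul, hw, smul_zero, add_zero]
  refine ((Set.finite_Ico 0 (n : ℤ)).image2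
    (fun a b => a • ((ω₁ / n : K) : K ⧸ Λ) + b • ((ω₂ / n : K) : K ⧸ Λ))
    (Set.finite_Ico 0 (n : ℤ))).subset ?_
  rintro y hy
  obtain ⟨z, rfl⟩ := mk_surjective y
  have hzΛ : (n : ℤ) • z ∈ Λ := by
    rw [← eq_zero_iff, mk_zsmul, natCast_zsmul]
    exact hy
  obtain ⟨a, b, hab⟩ := AddSubgroup.mem_closure_pair.mp hzΛ
  have hz : z = a • (ω₁ / n) + b • (ω₂ / n) := by
    simp only [zsmul_eq_mul, Int.cast_natCast] at hab ⊢
    field_simp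
    linear_combination -hab
  refine ⟨a % n, ⟨Int.emod_nonneg a hn0.ne', Int.emod_lt_of_pos a hn0⟩, b % n,
    ⟨Int.emod_nonneg b hn0.ne', Int.emod_lt_of_pos b hn0⟩, ?_⟩
  dsimp only
  rw [← hmod _ (htors ω₁ (by simp)), ← hmod _ (htors ω₂ (by simp)), hz, mk_add, mk_zsmul,
    mk_zsmul]

theorem ellipticAut.right_ne_one_of_act_eq_self {A : Type*} [AddCommGroup A] {H : Type*}
    [Group H] {φ : H →* MulAut (Multiplicative A)} {g : Multiplicative A ⋊[φ] H} (hg : g ≠ 1)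
    {x : A} (hx : ellipticAut.act φ g x = x) : g.right ≠ 1 := by
  intro hright
  refine hg (SemidirectProduct.ext ?_ hright)
  simpa [ellipticAut.act, hright] using hx

theorem stmt_14_general (ω₁ ω₂ : ℂ)
    (Λ : AddSubgroup ℂ) (hΛ : Λ = AddSubgroup.closure {ω₁, ω₂})
    (n : ℕ) (hn : 0 < n)
    (φ : Multiplicative (ZMod n) →* MulAut (Multiplicative (ℂ ⧸ Λ)))
    (ρ : ZMod n → ℂ) (hρroot : ∀ j, ρ j ^ n = 1)
    (hρact : ∀ (j : ZMod n) (z : ℂ),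
      φ (Multiplicative.ofAdd j) (Multiplicative.ofAdd ((z : ℂ ⧸ Λ)))
        = Multiplicative.ofAdd ((ρ j * z : ℂ) : ℂ ⧸ Λ))
    (hρfaithful : ∀ j : ZMod n, j ≠ 0 → ρ j ≠ 1)
    (G : Subgroup (Multiplicative (ℂ ⧸ Λ) ⋊[φ] Multiplicative (ZMod n)))
    (hGfin : Finite G)
    (hnotfree : ∃ g ∈ G, g ≠ 1 ∧ ∃ x : ℂ ⧸ Λ, ellipticAut.act φ g x = x) :
    Finite (Subgroup.normalizer (G : Set (Multiplicative (ℂ ⧸ Λ) ⋊[φ] Multiplicative (ZMod n)))) := by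
  subst hΛ
  have : NeZero n := ⟨hn.ne'⟩
  obtain ⟨g, hgG, hg1, x, hgx⟩ := hnotfree
  set j := Multiplicative.toAdd g.right
  have hj : j ≠ 0 := toAdd_eq_zero.not.mpr (ellipticAut.right_ne_one_of_act_eq_self hg1 hgx)
  have hfix : {a | φ g.right a = a}.Finite := by
    refine ((QuotientAddGroup.finite_setOf_nsmul_eq_zero_closure_pair ω₁ ω₂ hn.ne').preimage
      Multiplicative.toAdd.injective.injOn).subset fun a ha => ?_
    exact QuotientAddGroup.nsmul_eq_zero_of_fixed_by_root_of_unity (hρroot j) (hρfaithful j hj)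
      (σ := fun y => (φ g.right (.ofAdd y)).toAdd)
      (fun z => congrArg Multiplicative.toAdd (hρact j z)) (congrArg Multiplicative.toAdd ha)
  have hconj := Subgroup.finite_setOf_conj_mem
    (SemidirectProduct.finite_centralizer_singleton hfix) (Set.toFinite (G : Set _))
  exact (hconj.subset fun t ht => (Subgroup.mem_normalizer_iff.mp ht g).mp hgG).to_subtype

/-- Let `C = ℂ/Λ` be an elliptic curve, with automorphism group modeled as the semidirect
product of `C` (translations) by `ℤ/nℤ`, `n ≤ 6`, acting by multiplication by roots of
unity. If `G` is a nontrivial finite subgroup whose action on `C` is not free, then the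
normalizer of `G` in `Aut(C)` is finite. -/
theorem stmt_14 (ω₁ ω₂ : ℂ) (hindep : LinearIndependent ℝ ![ω₁, ω₂])
    (Λ : AddSubgroup ℂ) (hΛ : Λ = AddSubgroup.closure {ω₁, ω₂})
    (n : ℕ) (hn : 0 < n) (hn6 : n ≤ 6)
    (φ : Multiplicative (ZMod n) →* MulAut (Multiplicative (ℂ ⧸ Λ)))
    (ρ : ZMod n → ℂ) (hρroot : ∀ j, ρ j ^ n = 1)
    (hρact : ∀ (j : ZMod n) (z : ℂ),
      φ (Multiplicative.ofAdd j) (Multiplicative.ofAdd ((z : ℂ ⧸ Λ)))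
        = Multiplicative.ofAdd ((ρ j * z : ℂ) : ℂ ⧸ Λ))
    (hρfaithful : ∀ j : ZMod n, j ≠ 0 → ρ j ≠ 1)
    (G : Subgroup (Multiplicative (ℂ ⧸ Λ) ⋊[φ] Multiplicative (ZMod n)))
    (hGfin : Finite G) (hGnontriv : G ≠ ⊥)
    (hnotfree : ∃ g ∈ G, g ≠ 1 ∧ ∃ x : ℂ ⧸ Λ, ellipticAut.act φ g x = x) :
    Finite (Subgroup.normalizer (G : Set (Multiplicative (ℂ ⧸ Λ) ⋊[φ] Multiplicative (ZMod n)))) :=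
  stmt_14_general ω₁ ω₂ Λ hΛ n hn φ ρ hρroot hρact hρfaithful G hGfin hnotfree
end
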